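/- Let G = W(H) be a whisker graph, ℓ the length of a shortest odd cycle of H (assuming one exists), F a facet of MF^q(G), and f ⊆ F a face containing q−1 pairwise disjoint edges of which m lie in E(H). If m < ⌊ℓ/2⌋, then |F| = n + q − 1. -/

import Mathlib

variable {V : Type*}

/-- `M` is a set of pairwise disjoint edges of `G` with all endpoints in `F`. -/
def IsMatchingOn (G : SimpleGraph V) (F : Finset V) (M : Finset (Sym2 V)) : Prop :=
  (∀ e ∈ M, e ∈ G.edgeSet) ∧
  (∀ e ∈ M, ∀ v ∈ e, v ∈ F) ∧
  (∀ e ∈ M, ∀ e' ∈ M, e ≠ e' → ∀ v ∈ e, v ∉ e')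

/-- `F` is a face of the `q`-matching-free complex `MF^q(G)`. -/
def MFFace (G : SimpleGraph V) (q : ℕ) (F : Finset V) : Prop :=
  ¬ ∃ M : Finset (Sym2 V), IsMatchingOn G F M ∧ M.card = q

/-- `F` is a facet (maximal face) of the complex with face predicate `faces`. -/
def IsFacet (faces : Finset V → Prop) (F : Finset V) : Prop :=
  faces F ∧ ∀ F', faces F' → F ⊆ F' → F = F'

/-- Even-connection of `u` and `v` with respect to the pairwise disjoint edges in `M`. -/
def EvenConnected (G : SimpleGraph V) (M : Finset (Sym2 V)) (u v : V) : Prop :=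
  ∃ (r : ℕ) (p : ℕ → V), 1 ≤ r ∧ p 0 = u ∧ p (2 * r + 1) = v ∧
    (∀ k, k ≤ 2 * r → G.Adj (p k) (p (k + 1))) ∧
    (∀ k, k < r → s(p (2 * k + 1), p (2 * k + 2)) ∈ M) ∧
    (∀ k l, k < r → l < r →
      s(p (2 * k + 1), p (2 * k + 2)) = s(p (2 * l + 1), p (2 * l + 2)) → k = l)

/-- The set of vertices covered by the edges in `M`. -/
def mSupp (M : Finset (Sym2 V)) : Set V := {v | ∃ e ∈ M, v ∈ e}

/-- The even-connection graph `G^{e₁⋯e_q}` (vertices covered by `M` are isolated). -/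
def evenConnGraph (G : SimpleGraph V) (M : Finset (Sym2 V)) : SimpleGraph V where
  Adj x y := x ≠ y ∧ x ∉ mSupp M ∧ y ∉ mSupp M ∧
    (G.Adj x y ∨ EvenConnected G M x y ∨ EvenConnected G M y x)
  symm := by
    refine ⟨?_⟩
    rintro x y ⟨hne, hx, hy, h⟩
    refine ⟨hne.symm, hy, hx, ?_⟩
    rcases h with h | h | h
    · exact Or.inl h.symm
    · exact Or.inr (Or.inr h)
    · exact Or.inr (Or.inl h)
  loopless := ⟨fun x h => h.1 rfl⟩

/-- Delete a set of vertices from a graph (keeping them as isolated vertices). -/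
def delSet (G : SimpleGraph V) (S : Set V) : SimpleGraph V where
  Adj x y := G.Adj x y ∧ x ∉ S ∧ y ∉ S
  symm := ⟨fun x y ⟨h, hx, hy⟩ => ⟨h.symm, hy, hx⟩⟩
  loopless := ⟨fun x ⟨h, _, _⟩ => G.loopless.irrefl x h⟩

/-- The whisker graph `W(H)`: each vertex `x` (as `Sum.inl x`) gets a pendant
whisker vertex `Sum.inr x`. -/
def whisker (H : SimpleGraph V) : SimpleGraph (V ⊕ V) where
  Adj x y :=
    (∃ a b, x = Sum.inl a ∧ y = Sum.inl b ∧ H.Adj a b) ∨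
    (∃ a, (x = Sum.inl a ∧ y = Sum.inr a) ∨ (x = Sum.inr a ∧ y = Sum.inl a))
  symm := by
    refine ⟨?_⟩
    rintro x y (⟨a, b, hx, hy, hab⟩ | ⟨a, h | h⟩)
    · exact Or.inl ⟨b, a, hy, hx, hab.symm⟩
    · exact Or.inr ⟨a, Or.inr ⟨h.2, h.1⟩⟩
    · exact Or.inr ⟨a, Or.inl ⟨h.2, h.1⟩⟩
  loopless := by
    refine ⟨?_⟩
    rintro x (⟨a, b, hx, hy, hab⟩ | ⟨a, ⟨h1, h2⟩ | ⟨h1, h2⟩⟩)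
    · obtain rfl := Sum.inl_injective (hx ▸ hy : (Sum.inl a : V ⊕ V) = Sum.inl b)
      exact H.loopless.irrefl a hab
    · exact Sum.inl_ne_inr (h1 ▸ h2 : (Sum.inl a : V ⊕ V) = Sum.inr a)
    · exact Sum.inr_ne_inl (h1 ▸ h2 : (Sum.inr a : V ⊕ V) = Sum.inl a)

/-- Shellability of the complex with face predicate `faces`: there is a linear
order `F 0, F 1, …` of all facets such that each facet meets the union of the
previous ones in a pure subcomplex of codimension one. -/
def Shellable (faces : Finset V → Prop) : Prop :=
  ∃ (t : ℕ) (F : Fin t → Finset V),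
    (∀ i, IsFacet faces (F i)) ∧
    (∀ F', IsFacet faces F' → ∃ i, F' = F i) ∧
    Function.Injective F ∧
    ∀ k : Fin t, 0 < (k : ℕ) → ∀ σ : Finset V, σ ⊆ F k →
      (∃ i, i < k ∧ σ ⊆ F i) →
      ∃ τ : Finset V, σ ⊆ τ ∧ τ ⊆ F k ∧ (∃ i, i < k ∧ τ ⊆ F i) ∧
        τ.card = (F k).card - 1

/-- Vertex decomposability of the complex with face predicate `faces`. -/
inductive VertexDecomposable [DecidableEq V] : (Finset V → Prop) → Prop
  | simplex (faces : Finset V → Prop) (F : Finset V)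
      (h : ∀ F', faces F' ↔ F' ⊆ F) : VertexDecomposable faces
  | shed (faces : Finset V → Prop) (v : V)
      (hdel : VertexDecomposable (fun F => faces F ∧ v ∉ F))
      (hlink : VertexDecomposable (fun F => v ∉ F ∧ faces (insert v F)))
      (hshed : ∀ F, v ∉ F → faces (insert v F) →
        ¬ IsFacet (fun F' => faces F' ∧ v ∉ F') F) :
      VertexDecomposable faces

/-!
Every facet `F` meets each pair `{xᵢ, yᵢ}`, so `|F| = n + |P|` where `P = F.toLeft ∩ F.toRight`
is the set of `i` with both `xᵢ, yᵢ ∈ F`; let `U = F.toLeft \ F.toRight`. Trading `H`-edges at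
vertices of `P` for whiskers, a matching of `W(H)[F]` has at most `|P| + ν(H[U])` edges, and this
bound is attained, so `F` is a face iff `|P| + ν(H[U]) < q`. Maximality of `F` (adding `yᵢ` for
`i ∈ U`) says that every vertex of `H[U]` is missed by some maximum matching, and the given
matching gives `q - 1 ≤ |P| + m`, so `ν(H[U]) ≤ m`. If `H[U]` had an edge `uv`, take maximum
matchings missing `u` and `v`; the alternating path from `v` either enlarges a matching, or frees
`u` and `v` simultaneously, or ends at `u` and closes with `uv` an odd cycle of length at most
`2ν + 1 ≤ 2m + 1 < ℓ`. Hence `H[U]` has no edges and `|P| = q - 1`.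
-/

open Finset Sum SimpleGraph

section Matching

variable {G : SimpleGraph V} {F F' : Finset V} {M M' N : Finset (Sym2 V)} {e : Sym2 V} {v : V}

theorem mSupp_mono (h : M ⊆ M') : mSupp M ⊆ mSupp M' :=
  fun _ ⟨e, he, hv⟩ => ⟨e, h he, hv⟩

theorem mem_mSupp_insert [DecidableEq V] : v ∈ mSupp (insert e M) ↔ v ∈ e ∨ v ∈ mSupp M := by
  simp [mSupp]

theorem notMem_of_forall_notMem_mSupp (h : ∀ v ∈ e, v ∉ mSupp M) : e ∉ M := by
  induction e with
  | _ a b => exact fun he => h a (Sym2.mem_mk_left a b) ⟨_, he, Sym2.mem_mk_left a b⟩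

theorem mem_mSupp_erase_of_notMem [DecidableEq V] (hv : v ∈ mSupp M) (hve : v ∉ e) :
    v ∈ mSupp (M.erase e) := by
  obtain ⟨e', he', hv'⟩ := hv
  exact ⟨e', mem_erase.2 ⟨fun h => hve (h ▸ hv'), he'⟩, hv'⟩

theorem card_union_of_disjoint_mSupp [DecidableEq V] (h : Disjoint (mSupp M) (mSupp N)) :
    (M ∪ N).card = M.card + N.card := by
  refine card_union_of_disjoint (disjoint_left.2 fun e heM heN => ?_)
  induction e with
  | _ a b => exact h.ne_of_mem ⟨_, heM, Sym2.mem_mk_left a b⟩ ⟨_, heN, Sym2.mem_mk_left a b⟩ rfl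

theorem card_insert_of_forall_notMem_mSupp [DecidableEq V] (hfree : ∀ v ∈ e, v ∉ mSupp M) :
    (insert e M).card = M.card + 1 :=
  card_insert_of_notMem (notMem_of_forall_notMem_mSupp hfree)

namespace IsMatchingOn

theorem mono (h : IsMatchingOn G F M) (hF : F ⊆ F') : IsMatchingOn G F' M :=
  ⟨h.1, fun e he v hv => hF (h.2.1 e he v hv), h.2.2⟩

theorem subset (h : IsMatchingOn G F M) (hM : M' ⊆ M) : IsMatchingOn G F M' :=
  ⟨fun e he => h.1 e (hM he), fun e he => h.2.1 e (hM he),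
    fun e he e' he' => h.2.2 e (hM he) e' (hM he')⟩

theorem mSupp_subset (h : IsMatchingOn G F M) : mSupp M ⊆ F :=
  fun _ ⟨e, he, hv⟩ => h.2.1 e he _ hv

theorem eq_of_mem (h : IsMatchingOn G F M) {e e' : Sym2 V} (he : e ∈ M) (he' : e' ∈ M)
    (hv : v ∈ e) (hv' : v ∈ e') : e = e' :=
  by_contra fun hne => h.2.2 e he e' he' hne v hv hv'

theorem notMem_mSupp_erase [DecidableEq V] (h : IsMatchingOn G F M) (he : e ∈ M) (hv : v ∈ e) :
    v ∉ mSupp (M.erase e) :=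
  fun ⟨_, he', hv'⟩ => ne_of_mem_erase he' (h.eq_of_mem (mem_of_mem_erase he') he hv' hv)

theorem exists_adj (h : IsMatchingOn G F M) (hM : M.Nonempty) :
    ∃ u v, G.Adj u v ∧ u ∈ F ∧ v ∈ F := by
  obtain ⟨e, he⟩ := hM
  induction e with
  | _ u v => exact ⟨u, v, h.1 _ he, h.2.1 _ he u (by simp), h.2.1 _ he v (by simp)⟩

protected theorem empty : IsMatchingOn G F ∅ := by
  simp [IsMatchingOn]

protected theorem insert [DecidableEq V] (h : IsMatchingOn G F M) (he : e ∈ G.edgeSet)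
    (heF : ∀ v ∈ e, v ∈ F) (hfree : ∀ v ∈ e, v ∉ mSupp M) : IsMatchingOn G F (insert e M) := by
  refine ⟨?_, ?_, fun e₁ he₁ e₂ he₂ hne v hv₁ hv₂ => hne ?_⟩
  · simpa using ⟨he, h.1⟩
  · simpa using ⟨heF, h.2.1⟩
  · rcases mem_insert.1 he₁ with rfl | hm₁ <;> rcases mem_insert.1 he₂ with rfl | hm₂
    · rfl
    · exact (hfree v hv₁ ⟨e₂, hm₂, hv₂⟩).elim
    · exact (hfree v hv₂ ⟨e₁, hm₁, hv₁⟩).elim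
    · exact h.eq_of_mem hm₁ hm₂ hv₁ hv₂

protected theorem union [DecidableEq V] (hM : IsMatchingOn G F M) (hN : IsMatchingOn G F N)
    (h : Disjoint (mSupp M) (mSupp N)) : IsMatchingOn G F (M ∪ N) := by
  refine ⟨?_, ?_, fun e₁ he₁ e₂ he₂ hne v hv₁ hv₂ => hne ?_⟩
  · simpa [or_imp, forall_and] using ⟨hM.1, hN.1⟩
  · simpa [or_imp, forall_and] using ⟨hM.2.1, hN.2.1⟩
  · rcases mem_union.1 he₁ with hm₁ | hm₁ <;> rcases mem_union.1 he₂ with hm₂ | hm₂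
    · exact hM.eq_of_mem hm₁ hm₂ hv₁ hv₂
    · exact (h.ne_of_mem ⟨e₁, hm₁, hv₁⟩ ⟨e₂, hm₂, hv₂⟩ rfl).elim
    · exact (h.ne_of_mem ⟨e₂, hm₂, hv₂⟩ ⟨e₁, hm₁, hv₁⟩ rfl).elim
    · exact hN.eq_of_mem hm₁ hm₂ hv₁ hv₂

theorem card_le_of_forall_exists_mem (h : IsMatchingOn G F M) {T : Finset (Sym2 V)}
    (hT : T ⊆ M) {S : Finset V} (hS : ∀ e ∈ T, ∃ v ∈ S, v ∈ e) : T.card ≤ S.card :=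
  card_le_card_of_forall_subsingleton (fun e v => v ∈ e) hS fun _ _ _ he _ he' =>
    h.eq_of_mem (hT he.1) (hT he'.1) he.2 he'.2

end IsMatchingOn

end Matching

section Embedding

variable {W : Type*} {G : SimpleGraph V} {G' : SimpleGraph W} {F : Finset V}
  {M : Finset (Sym2 V)}

theorem IsMatchingOn.restrict [DecidableEq V] (h : IsMatchingOn G F M) (S : Finset V) :
    IsMatchingOn G S (M ∩ S.sym2) :=
  ⟨fun e he => h.1 e (mem_inter.1 he).1, fun _ he => mem_sym2_iff.1 (mem_inter.1 he).2,
    fun e he e' he' => h.2.2 e (mem_inter.1 he).1 e' (mem_inter.1 he').1⟩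

theorem IsMatchingOn.map [DecidableEq W] (f : G ↪g G') (h : IsMatchingOn G F M) :
    IsMatchingOn G' (F.image f) (M.image (Sym2.map f)) := by
  refine ⟨?_, ?_, ?_⟩
  · simp only [forall_mem_image, f.map_mem_edgeSet_iff]
    exact h.1
  · simp only [forall_mem_image, Sym2.mem_map]
    rintro e he _ ⟨v, hv, rfl⟩
    exact mem_image_of_mem f (h.2.1 e he v hv)
  · simp only [forall_mem_image, Sym2.mem_map]
    rintro e he e' he' hne _ ⟨v, hv, rfl⟩ ⟨v', hv', hvv'⟩
    rw [f.injective hvv'] at hv'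
    exact h.2.2 e he e' he' (fun h => hne (h ▸ rfl)) v hv hv'

theorem IsMatchingOn.comap {M : Finset (Sym2 W)} {F : Finset W} (f : G ↪g G')
    (h : IsMatchingOn G' F M) :
    IsMatchingOn G (F.preimage f f.injective.injOn)
      (M.preimage (Sym2.map f) (Sym2.map.injective f.injective).injOn) := by
  refine ⟨fun e he => f.map_mem_edgeSet_iff.1 (h.1 _ (mem_preimage.1 he)),
    fun e he v hv => mem_preimage.2 (h.2.1 _ (mem_preimage.1 he) _ (Sym2.mem_map.2 ⟨v, hv, rfl⟩)),
    fun e he e' he' hne v hv hv' => ?_⟩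
  exact h.2.2 _ (mem_preimage.1 he) _ (mem_preimage.1 he')
    (fun h => hne (Sym2.map.injective f.injective h)) _ (Sym2.mem_map.2 ⟨v, hv, rfl⟩)
    (Sym2.mem_map.2 ⟨v, hv', rfl⟩)

end Embedding

section Alternating

variable {G : SimpleGraph V} {F : Finset V} {M N : Finset (Sym2 V)} {x y z : V}

def Augmentable (G : SimpleGraph V) (F : Finset V) (M N : Finset (Sym2 V)) : Prop :=
  ∃ N', IsMatchingOn G F N' ∧ mSupp N' ⊆ mSupp M ∪ mSupp N ∧ N'.card = N.card + 1

def Exchangeable (G : SimpleGraph V) (F : Finset V) (M : Finset (Sym2 V)) (x t : V) : Prop :=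
  ∃ M', IsMatchingOn G F M' ∧ M'.card = M.card ∧ x ∉ mSupp M' ∧
    insert x (mSupp M') = insert t (mSupp M)

/-- The matching in `Exchangeable` is `M` switched along the alternating path `w`. -/
def AlternatingSwap (G : SimpleGraph V) (F : Finset V) (M N : Finset (Sym2 V)) (x : V) : Prop :=
  ∃ t ∉ mSupp M, ∃ w : G.Walk x t, w.IsPath ∧ Even w.length ∧ w.length ≤ 2 * M.card ∧
    (∀ e ∈ w.edges, e ∈ M ∨ e ∈ N) ∧ (∀ v ∈ w.support, v = x ∨ v ∈ mSupp M ∨ v ∈ mSupp N) ∧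
    Exchangeable G F M x t

theorem AlternatingSwap.nil (hM : IsMatchingOn G F M) (hx : x ∉ mSupp M) :
    AlternatingSwap G F M N x :=
  ⟨x, hx, .nil, by simp, by simp, by simp, by simp, by simp, M, hM, rfl, hx, rfl⟩

theorem notMem_of_alternating (hN : IsMatchingOn G F N) (hyz : s(y, z) ∈ N)
    (hxN : x ∉ mSupp N) : z ∉ s(x, y) := by
  rintro hz
  rcases Sym2.mem_iff.1 hz with rfl | rfl
  · exact hxN ⟨_, hyz, Sym2.mem_mk_right _ _⟩
  · exact (hN.1 _ hyz).ne rfl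

variable [DecidableEq V]

theorem mem_mSupp_iff_of_mem {e : Sym2 V} (he : e ∈ M) {v : V} :
    v ∈ mSupp M ↔ v ∈ e ∨ v ∈ mSupp (M.erase e) := by
  refine ⟨fun hv => or_iff_not_imp_left.2 (mem_mSupp_erase_of_notMem hv), ?_⟩
  rintro (hv | hv)
  exacts [⟨e, he, hv⟩, mSupp_mono (erase_subset _ _) hv]

theorem notMem_mSupp_erase_of_alternating (hM : IsMatchingOn G F M) (hN : IsMatchingOn G F N)
    (hxy : s(x, y) ∈ M) (hyz : s(y, z) ∈ N) (hxN : x ∉ mSupp N) :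
    ∀ v ∈ s(x, y), v ∉ mSupp (M.erase s(x, y)) ∧ v ∉ mSupp (N.erase s(y, z)) := by
  intro v hv
  refine ⟨hM.notMem_mSupp_erase hxy hv, ?_⟩
  rcases Sym2.mem_iff.1 hv with rfl | rfl
  · exact fun h => hxN (mSupp_mono (erase_subset _ _) h)
  · exact hN.notMem_mSupp_erase hyz (Sym2.mem_mk_left _ _)

theorem Augmentable.cons (hM : IsMatchingOn G F M) (hN : IsMatchingOn G F N)
    (hxy : s(x, y) ∈ M) (hyz : s(y, z) ∈ N) (hxN : x ∉ mSupp N)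
    (h : Augmentable G F (M.erase s(x, y)) (N.erase s(y, z))) : Augmentable G F M N := by
  obtain ⟨N', hN', hsupp, hcard⟩ := h
  have hout := notMem_mSupp_erase_of_alternating hM hN hxy hyz hxN
  have hfree : ∀ v ∈ s(x, y), v ∉ mSupp N' := fun v hv hvN' =>
    (hsupp hvN').elim (hout v hv).1 (hout v hv).2
  refine ⟨insert s(x, y) N', hN'.insert (hM.1 _ hxy) (hM.2.1 _ hxy) hfree, fun v hv => ?_, ?_⟩
  · rcases mem_mSupp_insert.1 hv with hv | hv
    · exact Or.inl ⟨_, hxy, hv⟩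
    · exact (hsupp hv).imp (fun h => mSupp_mono (erase_subset _ _) h)
        (fun h => mSupp_mono (erase_subset _ _) h)
  · rw [card_insert_of_forall_notMem_mSupp hfree, hcard, card_erase_add_one hyz]

theorem Exchangeable.cons {t : V} (hM : IsMatchingOn G F M) (hN : IsMatchingOn G F N)
    (hxy : s(x, y) ∈ M) (hyz : s(y, z) ∈ N) (hxN : x ∉ mSupp N) (ht : t ∉ s(x, y))
    (h : Exchangeable G F (M.erase s(x, y)) z t) : Exchangeable G F M x t := by
  obtain ⟨M', hM', hcard, hzM', hM'supp⟩ := h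
  have hout := notMem_mSupp_erase_of_alternating hM hN hxy hyz hxN
  have hM'xy : ∀ v ∈ s(x, y), v ∉ mSupp M' := fun v hv hvM' => by
    rcases (hM'supp ▸ Set.mem_insert_of_mem z hvM' : v ∈ insert t _) with rfl | h
    exacts [ht hv, (hout v hv).1 h]
  have hfree : ∀ v ∈ s(y, z), v ∉ mSupp M' := by
    intro v hv
    rcases Sym2.mem_iff.1 hv with rfl | rfl
    exacts [hM'xy v (Sym2.mem_mk_right _ _), hzM']
  refine ⟨insert s(y, z) M', hM'.insert (hN.1 _ hyz) (hN.2.1 _ hyz) hfree, ?_, ?_, ?_⟩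
  · rw [card_insert_of_forall_notMem_mSupp hfree, hcard, card_erase_add_one hxy]
  · rw [mem_mSupp_insert, not_or]
    refine ⟨fun hx => ?_, hM'xy x (Sym2.mem_mk_left _ _)⟩
    rcases Sym2.mem_iff.1 hx with h | h
    exacts [(hM.1 _ hxy).ne h, notMem_of_alternating hN hyz hxN (h ▸ Sym2.mem_mk_left _ _)]
  · ext v
    have h₁ := Set.ext_iff.1 hM'supp v
    have h₂ := mem_mSupp_iff_of_mem hxy (v := v)
    simp only [Set.mem_insert_iff, mem_mSupp_insert, Sym2.mem_iff] at h₁ h₂ ⊢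
    tauto

theorem AlternatingSwap.cons (hM : IsMatchingOn G F M) (hN : IsMatchingOn G F N)
    (hxy : s(x, y) ∈ M) (hyz : s(y, z) ∈ N) (hxN : x ∉ mSupp N)
    (h : AlternatingSwap G F (M.erase s(x, y)) (N.erase s(y, z)) z) :
    AlternatingSwap G F M N x := by
  obtain ⟨t, htM, w, hw, heven, hlen, hedges, hsupp, hexch⟩ := h
  have hout := notMem_mSupp_erase_of_alternating hM hN hxy hyz hxN
  have hwxy : ∀ v ∈ s(x, y), v ∉ w.support := fun v hv hvw =>
    (hsupp v hvw).elim (fun h => notMem_of_alternating hN hyz hxN (h ▸ hv))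
      fun h => h.elim (hout v hv).1 (hout v hv).2
  have htxy : t ∉ s(x, y) := fun ht => hwxy t ht w.end_mem_support
  have hadj_xy : G.Adj x y := hM.1 _ hxy
  have hadj_yz : G.Adj y z := hN.1 _ hyz
  refine ⟨t, fun ht => htxy ((mem_mSupp_iff_of_mem hxy).1 ht |>.resolve_right htM),
    .cons hadj_xy (.cons hadj_yz w), ?_, ?_, ?_, ?_, ?_,
    hexch.cons hM hN hxy hyz hxN htxy⟩
  · simp only [Walk.cons_isPath_iff, Walk.support_cons, List.mem_cons, not_or]
    exact ⟨⟨hw, hwxy y (Sym2.mem_mk_right _ _)⟩, hadj_xy.ne, hwxy x (Sym2.mem_mk_left _ _)⟩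
  · simpa [Walk.length_cons, Nat.even_add_one] using heven
  · have := card_erase_add_one hxy
    simp only [Walk.length_cons]
    omega
  · simp only [Walk.edges_cons, List.mem_cons]
    rintro e (rfl | rfl | he)
    · exact Or.inl hxy
    · exact Or.inr hyz
    · exact (hedges e he).imp mem_of_mem_erase mem_of_mem_erase
  · simp only [Walk.support_cons, List.mem_cons]
    rintro v (rfl | rfl | hv)
    · exact Or.inl rfl
    · exact Or.inr (Or.inl ⟨_, hxy, Sym2.mem_mk_right _ _⟩)
    · rcases hsupp v hv with rfl | h | h
      · exact Or.inr (Or.inr ⟨_, hyz, Sym2.mem_mk_right _ _⟩)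
      · exact Or.inr (Or.inl (mSupp_mono (erase_subset _ _) h))
      · exact Or.inr (Or.inr (mSupp_mono (erase_subset _ _) h))

theorem IsMatchingOn.augmentable_or_alternatingSwap (hM : IsMatchingOn G F M)
    (hN : IsMatchingOn G F N) (hxN : x ∉ mSupp N) :
    Augmentable G F M N ∨ AlternatingSwap G F M N x := by
  induction hk : M.card using Nat.strong_induction_on generalizing M N x with
  | _ k ih =>
  by_cases hxM : x ∈ mSupp M
  swap
  · exact Or.inr (.nil hM hxM)
  obtain ⟨e, he, hxe⟩ := hxM
  rw [← Sym2.other_spec hxe] at he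
  set y := Sym2.Mem.other hxe
  by_cases hyN : y ∈ mSupp N
  swap
  · have hfree : ∀ v ∈ s(x, y), v ∉ mSupp N := by
      intro v hv; rcases Sym2.mem_iff.1 hv with rfl | rfl; exacts [hxN, hyN]
    refine Or.inl ⟨insert s(x, y) N, hN.insert (hM.1 _ he) (hM.2.1 _ he) hfree,
      fun v hv => ?_, card_insert_of_forall_notMem_mSupp hfree⟩
    exact (mem_mSupp_insert.1 hv).imp (fun hv => ⟨_, he, hv⟩) id
  obtain ⟨g, hg, hyg⟩ := hyN
  rw [← Sym2.other_spec hyg] at hg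
  have hlt : (M.erase s(x, y)).card < k := hk ▸ card_erase_lt_of_mem he
  have hzN : Sym2.Mem.other hyg ∉ mSupp (N.erase s(y, Sym2.Mem.other hyg)) :=
    hN.notMem_mSupp_erase hg (Sym2.mem_mk_right _ _)
  exact (ih _ hlt (hM.subset (erase_subset _ _)) (hN.subset (erase_subset _ _)) hzN rfl).imp
    (.cons hM hN he hg hxN) (.cons hM hN he hg hxN)

end Alternating

theorem exists_odd_cycle_of_forall_exists_matching_erase [DecidableEq V] {H : SimpleGraph V}
    {B : Finset V} {k : ℕ} (hmax : ∀ K, IsMatchingOn H B K → K.card ≤ k)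
    (havoid : ∀ i ∈ B, ∃ K, IsMatchingOn H (B.erase i) K ∧ k ≤ K.card)
    {u v : V} (hu : u ∈ B) (hv : v ∈ B) (huv : H.Adj u v) :
    ∃ w : H.Walk u u, w.IsCycle ∧ Odd w.length ∧ w.length ≤ 2 * k + 1 := by
  obtain ⟨M, hMu, hMk⟩ := havoid u hu
  obtain ⟨N, hNv, hNk⟩ := havoid v hv
  have hM := hMu.mono (erase_subset _ _)
  have hMk' := hmax M hM
  have huM : u ∉ mSupp M := fun h => notMem_erase u B (hMu.mSupp_subset h)
  have hvN : v ∉ mSupp N := fun h => notMem_erase v B (hNv.mSupp_subset h)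
  -- a `k`-matching on `B` missing both `u` and `v` would extend by `s(u, v)`
  have hnot_both : ∀ K, IsMatchingOn H B K → k ≤ K.card → u ∉ mSupp K → v ∉ mSupp K → False := by
    intro K hK hKk huK hvK
    have hfree : ∀ w ∈ s(u, v), w ∉ mSupp K := by
      intro w hw; rcases Sym2.mem_iff.1 hw with rfl | rfl; exacts [huK, hvK]
    have hheF : ∀ w ∈ s(u, v), w ∈ B := by
      intro w hw; rcases Sym2.mem_iff.1 hw with rfl | rfl; exacts [hu, hv]
    have := hmax _ (hK.insert huv hheF hfree)
    rw [card_insert_of_forall_notMem_mSupp hfree] at this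
    omega
  rcases hM.augmentable_or_alternatingSwap (hNv.mono (erase_subset _ _)) hvN with
    ⟨N', hN', -, hcard⟩ | ⟨t, -, w, hw, heven, hlen, hedges, -, M', hM', hcard, hvM', hsupp⟩
  · have := hmax N' hN'
    omega
  by_cases htu : t = u
  · subst htu
    refine ⟨.cons huv w, ?_, by simpa using heven.add_one, by simp; omega⟩
    rw [Walk.cons_isCycle_iff]
    refine ⟨hw, fun h => ?_⟩
    rcases hedges _ h with h | h
    exacts [huM ⟨_, h, Sym2.mem_mk_left _ _⟩, hvN ⟨_, h, Sym2.mem_mk_right _ _⟩]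
  · refine (hnot_both M' hM' (hcard ▸ hMk) (fun huM' => ?_) hvM').elim
    have : u ∈ insert t (mSupp M) := hsupp ▸ Set.mem_insert_of_mem v huM'
    exact this.elim (fun h => htu h.symm) huM

section Whisker

variable {H : SimpleGraph V} {a b : V}

@[simp] theorem whisker_adj_inl_inl : (whisker H).Adj (inl a) (inl b) ↔ H.Adj a b := by
  simp [whisker]

@[simp] theorem whisker_adj_inl_inr : (whisker H).Adj (inl a) (inr b) ↔ a = b := by
  simp [whisker, eq_comm]

def whiskerInl (H : SimpleGraph V) : H ↪g whisker H where
  toFun := inl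
  inj' := inl_injective
  map_rel_iff' := whisker_adj_inl_inl

@[simp] theorem coe_whiskerInl : ⇑(whiskerInl H) = inl := rfl

theorem mem_edgeSet_whisker {e : Sym2 (V ⊕ V)} (he : e ∈ (whisker H).edgeSet) :
    (∃ a b, H.Adj a b ∧ e = s(inl a, inl b)) ∨ ∃ a, e = s(inl a, inr a) := by
  induction e with
  | _ x y =>
    rcases he with ⟨a, b, rfl, rfl, hab⟩ | ⟨a, ⟨rfl, rfl⟩ | ⟨rfl, rfl⟩⟩
    · exact Or.inl ⟨a, b, hab, rfl⟩
    · exact Or.inr ⟨a, rfl⟩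
    · exact Or.inr ⟨a, Sym2.eq_swap⟩

variable [DecidableEq V] {F : Finset (V ⊕ V)} {K : Finset (Sym2 (V ⊕ V))}

theorem isMatchingOn_spokes {S : Finset V} (hS : ∀ a ∈ S, inl a ∈ F ∧ inr a ∈ F) :
    IsMatchingOn (whisker H) F (S.image fun a => s(inl a, inr a)) := by
  refine ⟨?_, ?_, ?_⟩
  · simp
  · simp only [forall_mem_image, Sym2.mem_iff]
    rintro a ha _ (rfl | rfl)
    exacts [(hS a ha).1, (hS a ha).2]
  · simp only [forall_mem_image, Sym2.mem_iff]
    rintro a - b - hne _ (rfl | rfl) <;> simp_all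

theorem card_spokes (S : Finset V) :
    (S.image fun a => (s(inl a, inr a) : Sym2 (V ⊕ V))).card = S.card :=
  card_image_of_injective _ fun a b h => by simpa using h

theorem IsMatchingOn.exists_card_le_add_of_whisker (hK : IsMatchingOn (whisker H) F K) :
    ∃ K', IsMatchingOn H (F.toLeft \ F.toRight) K' ∧
      K.card ≤ (F.toLeft ∩ F.toRight).card + K'.card := by
  set P := F.toLeft ∩ F.toRight
  set U := F.toLeft \ F.toRight
  set K' := K.preimage (Sym2.map inl) (Sym2.map.injective inl_injective).injOn ∩ U.sym2
  refine ⟨K', by simpa using (hK.comap (whiskerInl H)).restrict U, ?_⟩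
  -- an edge of `K` meeting no `inl a` with `a ∈ P` joins two vertices of `U`
  have hmeet : ∀ e ∈ K \ K'.image (Sym2.map inl), ∃ v ∈ P.image inl, v ∈ e := by
    intro e he
    obtain ⟨heK, hnot⟩ := mem_sdiff.1 he
    by_contra hP
    have hF := hK.2.1 e heK
    rcases mem_edgeSet_whisker (hK.1 e heK) with ⟨a, b, -, rfl⟩ | ⟨a, rfl⟩
    · refine hnot (mem_image.2 ⟨s(a, b), mem_inter.2 ⟨mem_preimage.2 heK,
        mem_sym2_iff.2 fun c hc => ?_⟩, rfl⟩)
      have hce : (inl c : V ⊕ V) ∈ s(inl a, inl b) := Sym2.mem_map.2 ⟨c, hc, rfl⟩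
      have hcF := hF _ hce
      exact mem_sdiff.2 ⟨mem_toLeft.2 hcF, fun hcR => hP ⟨inl c,
        mem_image_of_mem _ (mem_inter.2 ⟨mem_toLeft.2 hcF, hcR⟩), hce⟩⟩
    · simp only [Sym2.mem_iff, forall_eq_or_imp, forall_eq] at hF
      exact hP ⟨inl a, mem_image_of_mem _ (by simp [P, hF]), Sym2.mem_mk_left _ _⟩
  calc K.card ≤ (K \ K'.image (Sym2.map inl)).card + (K'.image (Sym2.map inl)).card :=
        card_le_card_sdiff_add_card
    _ ≤ (P.image inl).card + K'.card :=
        add_le_add (hK.card_le_of_forall_exists_mem sdiff_subset hmeet) card_image_le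
    _ ≤ P.card + K'.card := Nat.add_le_add_right card_image_le _

theorem exists_isMatchingOn_whisker_card_eq {L : Finset (Sym2 V)}
    (hL : IsMatchingOn H (F.toLeft \ F.toRight) L) :
    ∃ K', IsMatchingOn (whisker H) F K' ∧ K'.card = (F.toLeft ∩ F.toRight).card + L.card := by
  set P := F.toLeft ∩ F.toRight
  have hspokes : IsMatchingOn (whisker H) F (P.image fun a => s(inl a, inr a)) :=
    isMatchingOn_spokes fun a ha => by simpa [P] using ha
  have hmap := hL.map (whiskerInl H)
  simp only [coe_whiskerInl] at hmap
  have hdisj : Disjoint (mSupp (P.image fun a => s(inl a, inr a)))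
      (mSupp (L.image (Sym2.map inl))) := by
    refine Set.disjoint_left.2 fun v ⟨e, he, hve⟩ hvK => ?_
    obtain ⟨a, ha, rfl⟩ := mem_image.1 he
    obtain ⟨b, hb, rfl⟩ := mem_image.1 (hmap.mSupp_subset hvK)
    simp only [Sym2.mem_iff, inl.injEq, reduceCtorEq, or_false] at hve
    subst hve
    simp [P] at ha hb
    exact hb.2 ha.2
  refine ⟨_, hspokes.union (hmap.mono ?_) hdisj, ?_⟩
  · intro v hv
    obtain ⟨b, hb, rfl⟩ := mem_image.1 hv
    exact mem_toLeft.1 (mem_sdiff.1 hb).1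
  · rw [card_union_of_disjoint_mSupp hdisj, card_spokes,
      card_image_of_injective _ (Sym2.map.injective inl_injective)]

theorem mfFace_whisker_iff {q : ℕ} : MFFace (whisker H) q F ↔
    ∀ K, IsMatchingOn H (F.toLeft \ F.toRight) K → (F.toLeft ∩ F.toRight).card + K.card < q := by
  refine ⟨fun hF K hK => ?_, ?_⟩
  · obtain ⟨K', hK', hcard⟩ := exists_isMatchingOn_whisker_card_eq hK
    by_contra! hq
    obtain ⟨K'', hsub, hK''⟩ := exists_subset_card_eq (hcard ▸ hq : q ≤ K'.card)
    exact hF ⟨K'', hK'.subset hsub, hK''⟩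
  · rintro h ⟨K, hK, rfl⟩
    obtain ⟨K', hK', hle⟩ := hK.exists_card_le_add_of_whisker
    exact (h K' hK').not_ge hle

end Whisker

theorem IsFacet.not_insert {α : Type*} [DecidableEq α] {faces : Finset α → Prop} {F : Finset α}
    (hF : IsFacet faces F) {a : α} (ha : a ∉ F) : ¬ faces (insert a F) :=
  fun h => ha (hF.2 _ h (subset_insert a F) ▸ mem_insert_self a F)

section Facet

variable [DecidableEq V] {H : SimpleGraph V} {q : ℕ} {F : Finset (V ⊕ V)} {a : V}

theorem IsFacet.exists_matching_of_inr_notMem (hF : IsFacet (MFFace (whisker H) q) F)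
    (ha : inr a ∉ F) : ∃ K, IsMatchingOn H ((F.toLeft \ F.toRight).erase a) K ∧
      q ≤ (F.toLeft ∩ insert a F.toRight).card + K.card := by
  simpa [mfFace_whisker_iff, sdiff_insert] using hF.not_insert ha

theorem IsFacet.inl_mem_or_inr_mem (hF : IsFacet (MFFace (whisker H) q) F) (a : V) :
    inl a ∈ F ∨ inr a ∈ F := by
  by_contra! h
  obtain ⟨K, hK, hq⟩ := hF.exists_matching_of_inr_notMem h.2
  rw [inter_insert_of_notMem (by simpa using h.1)] at hq
  exact (mfFace_whisker_iff.1 hF.1 K (hK.mono (erase_subset _ _))).not_ge hq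

theorem IsFacet.exists_matching_erase (hF : IsFacet (MFFace (whisker H) q) F)
    (ha : a ∈ F.toLeft \ F.toRight) : ∃ K, IsMatchingOn H ((F.toLeft \ F.toRight).erase a) K ∧
      q ≤ (F.toLeft ∩ F.toRight).card + 1 + K.card := by
  obtain ⟨haL, haR⟩ := mem_sdiff.1 ha
  obtain ⟨K, hK, hq⟩ := hF.exists_matching_of_inr_notMem (mem_toRight.not.1 haR)
  rw [inter_insert_of_mem haL] at hq
  exact ⟨K, hK, hq.trans (Nat.add_le_add_right (card_insert_le _ _) _)⟩

theorem card_eq_card_add_card_inter [Fintype V] (hcov : ∀ a, inl a ∈ F ∨ inr a ∈ F) :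
    F.card = Fintype.card V + (F.toLeft ∩ F.toRight).card := by
  have huniv : F.toLeft ∪ F.toRight = univ := eq_univ_of_forall fun a => by simpa using hcov a
  rw [← card_toLeft_add_card_toRight, ← card_union_add_card_inter, huniv, card_univ]

theorem IsMatchingOn.card_le_card_inter_add_hEdges {M Mh : Finset (Sym2 (V ⊕ V))}
    (hM : IsMatchingOn (whisker H) F M)
    (hMh : ∀ e, e ∈ Mh ↔ e ∈ M ∧ ∀ v ∈ e, ∃ a : V, v = inl a) :
    M.card ≤ (F.toLeft ∩ F.toRight).card + Mh.card := by
  have hspoke : ∀ e ∈ M \ Mh, ∃ v ∈ (F.toLeft ∩ F.toRight).image inr, v ∈ e := by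
    intro e he
    obtain ⟨heM, heMh⟩ := mem_sdiff.1 he
    have hF := hM.2.1 e heM
    rcases mem_edgeSet_whisker (hM.1 e heM) with ⟨a, b, -, rfl⟩ | ⟨a, rfl⟩
    · exact (heMh ((hMh _).2 ⟨heM, by simp⟩)).elim
    · simp only [Sym2.mem_iff, forall_eq_or_imp, forall_eq] at hF
      exact ⟨inr a, mem_image_of_mem _ (by simpa using hF), Sym2.mem_mk_right _ _⟩
  calc M.card ≤ (M \ Mh).card + Mh.card := card_le_card_sdiff_add_card
    _ ≤ ((F.toLeft ∩ F.toRight).image inr).card + Mh.card :=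
        Nat.add_le_add_right (hM.card_le_of_forall_exists_mem sdiff_subset hspoke) _
    _ ≤ (F.toLeft ∩ F.toRight).card + Mh.card := Nat.add_le_add_right card_image_le _

end Facet

theorem facet_card_of_few_H_edges_general
    {V : Type*} [Fintype V] (H : SimpleGraph V)
    (n : ℕ) (hn : Fintype.card V = n) (ℓ : ℕ) (hodd : Odd ℓ)
    (hmin : ∀ (v : V) (w : H.Walk v v), w.IsCycle → Odd w.length → ℓ ≤ w.length)
    (q : ℕ)
    (F f : Finset (V ⊕ V)) (hF : IsFacet (MFFace (whisker H) q) F) (hfF : f ⊆ F)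
    (M : Finset (Sym2 (V ⊕ V))) (hM : IsMatchingOn (whisker H) f M)
    (hMcard : M.card = q - 1)
    (Mh : Finset (Sym2 (V ⊕ V)))
    (hMh : ∀ e, e ∈ Mh ↔ e ∈ M ∧ ∀ v ∈ e, ∃ a : V, v = Sum.inl a)
    (m : ℕ) (hm : Mh.card = m) (hmℓ : m < ℓ / 2) :
    F.card = n + q - 1 := by
  classical
  have hface := mfFace_whisker_iff.1 hF.1
  have hMm := (hM.mono hfF).card_le_card_inter_add_hEdges hMh
  obtain ⟨K₀, hK₀, hMK₀⟩ := (hM.mono hfF).exists_card_le_add_of_whisker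
  have hPq : (F.toLeft ∩ F.toRight).card < q := by simpa using hface ∅ .empty
  rw [card_eq_card_add_card_inter hF.inl_mem_or_inr_mem, hn]
  by_contra hF_card
  -- otherwise `H[U]` has an edge, and `k = q - 1 - |P|` is its matching number
  obtain ⟨u, v, huv, hu, hv⟩ := hK₀.exists_adj (card_pos.1 (by omega))
  obtain ⟨w, hw, hwodd, hwlen⟩ := exists_odd_cycle_of_forall_exists_matching_erase
    (k := q - 1 - (F.toLeft ∩ F.toRight).card) (fun K hK => by have := hface K hK; omega)
    (fun i hi => by
      obtain ⟨K, hK, hqK⟩ := hF.exists_matching_erase hi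
      exact ⟨K, hK, by omega⟩) hu hv huv
  have := hmin u w hw hwodd
  obtain ⟨j, rfl⟩ := hodd
  omega

/-- if `H` contains an odd cycle, `ℓ` is the length of a shortest odd
cycle, `F` is a facet of `MF^q(W(H))`, and `f ⊆ F` is a face carrying exactly `q-1`
disjoint edges of which `m < ⌊ℓ/2⌋` lie in `E(H)`, then `|F| = n + q - 1`. -/
theorem facet_card_of_few_H_edges
    {V : Type*} [Fintype V] [DecidableEq V] (H : SimpleGraph V)
    (n : ℕ) (hn : Fintype.card V = n) (ℓ : ℕ) (hodd : Odd ℓ)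
    (hcyc : ∃ (v : V) (w : H.Walk v v), w.IsCycle ∧ w.length = ℓ)
    (hmin : ∀ (v : V) (w : H.Walk v v), w.IsCycle → Odd w.length → ℓ ≤ w.length)
    (q : ℕ) (hq : 1 ≤ q)
    (F f : Finset (V ⊕ V)) (hF : IsFacet (MFFace (whisker H) q) F) (hfF : f ⊆ F)
    (hface : MFFace (whisker H) q f)
    (M : Finset (Sym2 (V ⊕ V))) (hM : IsMatchingOn (whisker H) f M)
    (hMcard : M.card = q - 1)
    (Mh : Finset (Sym2 (V ⊕ V)))
    (hMh : ∀ e, e ∈ Mh ↔ e ∈ M ∧ ∀ v ∈ e, ∃ a : V, v = Sum.inl a)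
    (m : ℕ) (hm : Mh.card = m) (hmℓ : m < ℓ / 2) :
    F.card = n + q - 1 :=
  facet_card_of_few_H_edges_general H n hn ℓ hodd hmin q F f hF hfF M hM hMcard Mh hMh m hm hmℓ
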